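/- Define P_α(t; r_α) for 0 < r_α and t > 0 by P_α(t;r_α) = (1/2)[erf((r_R − r_α)/√(4Dt)) + erf((r_R + r_α)/√(4Dt))]·e^{−k_d t} + (1/r_α)√(Dt/π)[exp(−(r_R+r_α)²/(4Dt) − k_d t) − exp(−(r_R−r_α)²/(4Dt) − k_d t)]. Then the average (1/(2 r_T)) ∫_{−r_T}^{r_T} P_α(t; √(r_T² + r_0² − 2 r_0 x)) dx equals P_u(t) = (1/(8 r_0 r_T))[ξ₁(r_0−r_T,t) + ξ₁(r_T−r_0,t) − ξ₁(r_0+r_T,t) − ξ₁(−r_0−r_T,t)] + (Dt/(2 r_T r_0))[ξ₂(r_T+r_0,t) + ξ₂(−r_T−r_0,t) − ξ₂(r_0−r_T,t) − ξ₂(r_T−r_0,t)], where ξ₁(z,t) = e^{−(r_R−z)²/(4Dt) − k_d t}(r_R+z)√(4Dt/π) + (r_R² + 2Dt − z²) erf((r_R−z)/√(4Dt)) e^{−k_d t} and ξ₂(z,t) = erf((r_R+z)/√(4Dt)) e^{−k_d t}. -/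

import Mathlib

open MeasureTheory

noncomputable def erf (x : ℝ) : ℝ :=
  (2 / Real.sqrt Real.pi) * ∫ s in (0 : ℝ)..x, Real.exp (-s ^ 2)

noncomputable def Pα (D k_d r_R t rα : ℝ) : ℝ :=
  (1 / 2) * (erf ((r_R - rα) / Real.sqrt (4 * D * t)) +
      erf ((r_R + rα) / Real.sqrt (4 * D * t))) * Real.exp (-k_d * t) +
    (1 / rα) * Real.sqrt (D * t / Real.pi) *
      (Real.exp (-(r_R + rα) ^ 2 / (4 * D * t) - k_d * t) -
        Real.exp (-(r_R - rα) ^ 2 / (4 * D * t) - k_d * t))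

noncomputable def ξ₁ (D k_d r_R z t : ℝ) : ℝ :=
  Real.exp (-(r_R - z) ^ 2 / (4 * D * t) - k_d * t) * (r_R + z) *
      Real.sqrt (4 * D * t / Real.pi) +
    (r_R ^ 2 + 2 * D * t - z ^ 2) * erf ((r_R - z) / Real.sqrt (4 * D * t)) *
      Real.exp (-k_d * t)

noncomputable def ξ₂ (D k_d r_R z t : ℝ) : ℝ :=
  erf ((r_R + z) / Real.sqrt (4 * D * t)) * Real.exp (-k_d * t)

/-!
Substituting `u = √(r_T² + r_0² - 2 r_0 x)` (so `dx = -(u / r_0) du`) turns the average into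
`(1 / (2 r_0 r_T)) ∫_{r_0 - r_T}^{r_0 + r_T} u Pα(u) du`. The integrand `u Pα(u)` has the explicit
primitive `-(ξ₁(u) + ξ₁(-u)) / 4 + D t (ξ₂(u) + ξ₂(-u))`: in `ξ₁'` the Gaussian terms cancel,
leaving `-2 z erf((r_R - z) / √(4 D t)) e^{-k_d t}`, while `ξ₂'` is a Gaussian.
-/

lemma hasDerivAt_erf (x : ℝ) :
    HasDerivAt erf (2 / Real.sqrt Real.pi * Real.exp (-x ^ 2)) x := by
  have hc : Continuous fun s : ℝ => Real.exp (-s ^ 2) := by fun_prop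
  exact (intervalIntegral.integral_hasStrictDerivAt_right (hc.intervalIntegrable 0 x)
    (hc.stronglyMeasurableAtFilter _ _) hc.continuousAt).hasDerivAt.const_mul _

@[fun_prop]
lemma continuous_erf : Continuous erf :=
  continuous_iff_continuousAt.2 fun x => (hasDerivAt_erf x).continuousAt

lemma exp_neg_div_sqrt_sq {c : ℝ} (hc : 0 ≤ c) (w : ℝ) :
    Real.exp (-(w / Real.sqrt c) ^ 2) = Real.exp (-w ^ 2 / c) := by
  rw [div_pow, Real.sq_sqrt hc, neg_div]

section Primitive

variable {D : ℝ} (k_d r_R : ℝ) {t : ℝ}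

lemma hasDerivAt_ξ₁ (hDt : 0 < D * t) (z : ℝ) :
    HasDerivAt (fun z => ξ₁ D k_d r_R z t)
      (-2 * z * erf ((r_R - z) / Real.sqrt (4 * D * t)) * Real.exp (-k_d * t)) z := by
  have hD : D ≠ 0 := left_ne_zero_of_mul hDt.ne'
  have ht : t ≠ 0 := right_ne_zero_of_mul hDt.ne'
  have h4 : 0 < 4 * D * t := by linarith
  have hs : Real.sqrt (4 * D * t) ^ 2 = 4 * D * t := Real.sq_sqrt h4.le
  have hlin : HasDerivAt (fun z : ℝ => r_R - z) (-1) z := (hasDerivAt_id z).const_sub r_R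
  have hgauss : HasDerivAt (fun z : ℝ => Real.exp (-(r_R - z) ^ 2 / (4 * D * t) - k_d * t))
      (Real.exp (-(r_R - z) ^ 2 / (4 * D * t) - k_d * t) * ((r_R - z) / (2 * D * t))) z := by
    refine (((hlin.fun_pow 2).fun_neg.div_const _).sub_const (k_d * t)).exp.congr_deriv ?_
    field_simp
    ring
  have herf := (hasDerivAt_erf _).comp z (hlin.div_const (Real.sqrt (4 * D * t)))
  refine (((hgauss.mul ((hasDerivAt_id z).const_add r_R)).mul_const _).add
    ((((hasDerivAt_pow 2 z).const_sub (r_R ^ 2 + 2 * D * t)).mul herf).mul_const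
      (Real.exp (-k_d * t)))).congr_deriv ?_
  simp only [Function.comp_apply, id, exp_neg_div_sqrt_sq h4.le, Real.sqrt_div' _ Real.pi_pos.le,
    Real.exp_sub, neg_mul, Real.exp_neg]
  field_simp
  rw [hs]
  ring

lemma hasDerivAt_ξ₂ (hDt : 0 < D * t) (z : ℝ) :
    HasDerivAt (fun z => ξ₂ D k_d r_R z t)
      (Real.exp (-(r_R + z) ^ 2 / (4 * D * t) - k_d * t) / Real.sqrt (Real.pi * D * t)) z := by
  have hlin : HasDerivAt (fun z : ℝ => r_R + z) 1 z := (hasDerivAt_id z).const_add r_R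
  refine (((hasDerivAt_erf _).comp z (hlin.div_const (Real.sqrt (4 * D * t)))).mul_const
    (Real.exp (-k_d * t))).congr_deriv ?_
  have hsqrt : Real.sqrt (4 * D * t) = 2 * Real.sqrt (D * t) := by
    rw [mul_assoc, Real.sqrt_mul zero_le_four, show (4 : ℝ) = 2 ^ 2 by norm_num,
      Real.sqrt_sq zero_le_two]
  rw [exp_neg_div_sqrt_sq (by linarith : (0 : ℝ) ≤ 4 * D * t)]
  simp only [Real.exp_sub, neg_mul, Real.exp_neg, mul_assoc Real.pi, Real.sqrt_mul Real.pi_pos.le,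
    hsqrt]
  field_simp

noncomputable def radialPrimitive (D k_d r_R t v : ℝ) : ℝ :=
  -(1 / 4) * (ξ₁ D k_d r_R v t + ξ₁ D k_d r_R (-v) t) +
    D * t * (ξ₂ D k_d r_R v t + ξ₂ D k_d r_R (-v) t)

lemma hasDerivAt_radialPrimitive (hDt : 0 < D * t) (v : ℝ) :
    HasDerivAt (radialPrimitive D k_d r_R t) (v * Pα D k_d r_R t v) v := by
  have hneg := hasDerivAt_neg v
  have hξ₁ := (hasDerivAt_ξ₁ k_d r_R hDt v).add ((hasDerivAt_ξ₁ k_d r_R hDt (-v)).comp v hneg)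
  have hξ₂ := (hasDerivAt_ξ₂ k_d r_R hDt v).add ((hasDerivAt_ξ₂ k_d r_R hDt (-v)).comp v hneg)
  refine ((hξ₁.const_mul (-(1 / 4))).add (hξ₂.const_mul (D * t))).congr_deriv ?_
  rcases eq_or_ne v 0 with rfl | hv
  · simp
  have hroot : D * t / Real.sqrt (Real.pi * D * t) = Real.sqrt (D * t / Real.pi) := by
    rw [mul_assoc, Real.sqrt_mul Real.pi_pos.le, mul_comm (Real.sqrt Real.pi), ← div_div,
      Real.div_sqrt, Real.sqrt_div' _ Real.pi_pos.le]
  simp only [Pα, ← sub_eq_add_neg, sub_neg_eq_add, ← hroot]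
  field_simp
  ring

end Primitive

lemma continuousAt_Pα (D k_d r_R t : ℝ) {v : ℝ} (hv : v ≠ 0) :
    ContinuousAt (Pα D k_d r_R t) v := by
  unfold Pα
  fun_prop (disch := assumption)

lemma hasDerivAt_radialPrimitive_comp_sqrt {D k_d r_R t b c x : ℝ} (hDt : 0 < D * t) (hb : b ≠ 0)
    (hx : 0 < c - 2 * b * x) :
    HasDerivAt (fun y => -(1 / b) * radialPrimitive D k_d r_R t (Real.sqrt (c - 2 * b * y)))
      (Pα D k_d r_R t (Real.sqrt (c - 2 * b * x))) x := by
  have hsqrt := ((hasDerivAt_id x).const_mul (2 * b)).const_sub c |>.sqrt hx.ne'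
  refine (((hasDerivAt_radialPrimitive k_d r_R hDt _).comp x hsqrt).const_mul _).congr_deriv ?_
  have hu := (Real.sqrt_pos.2 hx).ne'
  simp only [id]
  generalize Real.sqrt (c - 2 * b * x) = u at hu ⊢
  field_simp

theorem stmt_4_general (D k_d r_R r_T r_0 t : ℝ)
    (hD : 0 < D) (hrT : 0 < r_T) (ht : 0 < t) (h0T : r_T < r_0) :
    (1 / (2 * r_T)) *
        ∫ x in (-r_T)..r_T, Pα D k_d r_R t (Real.sqrt (r_T ^ 2 + r_0 ^ 2 - 2 * r_0 * x)) =
      (1 / (8 * r_0 * r_T)) *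
          (ξ₁ D k_d r_R (r_0 - r_T) t + ξ₁ D k_d r_R (r_T - r_0) t -
            ξ₁ D k_d r_R (r_0 + r_T) t - ξ₁ D k_d r_R (-r_0 - r_T) t) +
        (D * t / (2 * r_T * r_0)) *
          (ξ₂ D k_d r_R (r_T + r_0) t + ξ₂ D k_d r_R (-r_T - r_0) t -
            ξ₂ D k_d r_R (r_0 - r_T) t - ξ₂ D k_d r_R (r_T - r_0) t) := by
  have hDt : 0 < D * t := mul_pos hD ht
  have hdist : ∀ x ∈ Set.uIcc (-r_T) r_T, 0 < r_T ^ 2 + r_0 ^ 2 - 2 * r_0 * x := by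
    intro x hx
    rw [Set.uIcc_of_le (by linarith), Set.mem_Icc] at hx
    nlinarith
  have hint : ContinuousOn (fun x => Pα D k_d r_R t (Real.sqrt (r_T ^ 2 + r_0 ^ 2 - 2 * r_0 * x)))
      (Set.uIcc (-r_T) r_T) := fun x hx =>
    ((continuousAt_Pα D k_d r_R t (Real.sqrt_pos.2 (hdist x hx)).ne').comp
      (f := fun x => Real.sqrt (r_T ^ 2 + r_0 ^ 2 - 2 * r_0 * x)) (by fun_prop)).continuousWithinAt
  rw [intervalIntegral.integral_eq_sub_of_hasDerivAt
    (fun x hx => hasDerivAt_radialPrimitive_comp_sqrt hDt (by linarith) (hdist x hx))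
    hint.intervalIntegrable,
    show r_T ^ 2 + r_0 ^ 2 - 2 * r_0 * r_T = (r_0 - r_T) ^ 2 by ring,
    show r_T ^ 2 + r_0 ^ 2 - 2 * r_0 * -r_T = (r_0 + r_T) ^ 2 by ring,
    Real.sqrt_sq (by linarith), Real.sqrt_sq (by linarith)]
  simp only [radialPrimitive]
  ring_nf

/-- surface-average of the point-source observation probability. -/
theorem stmt_4 (D k_d r_R r_T r_0 t : ℝ)
    (hD : 0 < D) (hk : 0 < k_d) (hrR : 0 < r_R) (hrT : 0 < r_T) (hr0 : 0 < r_0)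
    (ht : 0 < t) (h0T : r_T < r_0) :
    (1 / (2 * r_T)) *
        ∫ x in (-r_T)..r_T, Pα D k_d r_R t (Real.sqrt (r_T ^ 2 + r_0 ^ 2 - 2 * r_0 * x)) =
      (1 / (8 * r_0 * r_T)) *
          (ξ₁ D k_d r_R (r_0 - r_T) t + ξ₁ D k_d r_R (r_T - r_0) t -
            ξ₁ D k_d r_R (r_0 + r_T) t - ξ₁ D k_d r_R (-r_0 - r_T) t) +
        (D * t / (2 * r_T * r_0)) *
          (ξ₂ D k_d r_R (r_T + r_0) t + ξ₂ D k_d r_R (-r_T - r_0) t -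
            ξ₂ D k_d r_R (r_0 - r_T) t - ξ₂ D k_d r_R (r_T - r_0) t) :=
  stmt_4_general D k_d r_R r_T r_0 t hD hrT ht h0T
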